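/- arXiv:1706.01633 — 2 statements merged into one kernel-verified Lean document; each statement's English description precedes it below -/
import Mathlib

section
/- Let G be a finite directed weighted graph with n vertices satisfying the Kirchhoff assumption, and let G_1 be a graph obtained from G by attaching a further weighted graph to G by a single edge (so that G_1 satisfies the Kirchhoff assumption and is G-flower-like with respect to the subgraph G). Then for every k = 1,…,n, λ_k(S_{G_1}) ≤ λ_k(S_G), where eigenvalues are listed increasingly with multiplicity. -/
open Finset

/-- The weighted inner product `(f,g)_m = ∑_x m(x) f(x) conj(g(x))` on functions `W → ℂ`. -/
noncomputable def innerM {W : Type*} [Fintype W] (m : W → ℝ) (f g : W → ℂ) : ℂ :=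
  ∑ x, (m x : ℂ) * f x * (starRingEnd ℂ) (g x)

/-- The self-adjoint operator `S f(x) = (1/m(x)) ∑_y a(x,y) (f(x) - f(y))`, where
`a(x,y) = b(x,y) + b(y,x)`. -/
noncomputable def opS {W : Type*} [Fintype W] (m : W → ℝ) (b : W → W → ℝ)
    (f : W → ℂ) (x : W) : ℂ :=
  (1 / (m x : ℂ)) * ∑ y, ((b x y + b y x : ℝ) : ℂ) * (f x - f y)

/-- `μ : Fin N → ℝ` lists, increasingly and with multiplicity, eigenvalues of the operator
`S` which is self-adjoint for the weighted inner product with weight `m`: `μ` is monotone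
and there is a corresponding `m`-orthonormal family of eigenfunctions.  When
`N = dim = card W`, such a family is an orthonormal basis, so `μ` is exactly the increasing
enumeration `λ_1 ≤ … ≤ λ_N` of the eigenvalues of `S` with multiplicity. -/
def IsMonoEigenListing {W : Type*} [Fintype W] (m : W → ℝ)
    (S : (W → ℂ) → (W → ℂ)) {N : ℕ} (μ : Fin N → ℝ) : Prop :=
  Monotone μ ∧ ∃ u : Fin N → (W → ℂ),
    (∀ i j, innerM m (u i) (u j) = if i = j then 1 else 0) ∧
    ∀ i, S (u i) = fun x => ((μ i : ℝ) : ℂ) * u i x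

/-- `x` and `y` are neighbours in the directed weighted graph with edge weight `b`. -/
def Nbr {V : Type*} (b : V → V → ℝ) (x y : V) : Prop := 0 < b x y ∨ 0 < b y x

/-- Kirchhoff assumption: `β⁺(x) = β⁻(x)` for all `x`. -/
def Kirchhoff {V : Type*} [Fintype V] (b : V → V → ℝ) : Prop :=
  ∀ x, ∑ y, b x y = ∑ y, b y x

/-- The graph with edge weight `b` is connected, ignoring orientation. -/
def ConnectedGraph {V : Type*} (b : V → V → ℝ) : Prop :=
  ∀ x y : V, Relation.ReflTransGen (Nbr b) x y

/-- The subgraph of `b` induced on `U` is connected, ignoring orientation. -/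
def ConnOn {V : Type*} (b : V → V → ℝ) (U : Finset V) : Prop :=
  ∀ x ∈ U, ∀ y ∈ U,
    Relation.ReflTransGen (fun u v => u ∈ U ∧ v ∈ U ∧ Nbr b u v) x y

/-- The interior of a set of vertices: those of its vertices all of whose neighbours lie
in the set. -/
def interiorSet {V : Type*} (b : V → V → ℝ) (Ω : Set V) : Set V :=
  {x | x ∈ Ω ∧ ∀ y, Nbr b x y → y ∈ Ω}

/-- The operator `S_H` of the subgraph induced on `U` (weights restricted from the ambient
graph), acting on functions `↥U → ℂ`. -/
noncomputable def opSsub {V : Type*} [Fintype V] (m : V → ℝ) (b : V → V → ℝ)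
    (U : Finset V) : (↥U → ℂ) → (↥U → ℂ) :=
  opS (fun x : ↥U => m ↑x) (fun x y : ↥U => b ↑x ↑y)

/-- The Dirichlet operator `S^D_U`, acting on functions supported in `U` (identified with
functions `↥U → ℂ`, extended by zero): `S^D_U f(x) = (1/m(x)) ∑_{y ∈ V} a(x,y)(f(x)-f(y))`
for `x ∈ U`. -/
noncomputable def opSDir {V : Type*} [Fintype V] [DecidableEq V] (m : V → ℝ) (b : V → V → ℝ)
    (U : Finset V) (f : ↥U → ℂ) (x : ↥U) : ℂ :=
  (1 / (m ↑x : ℂ)) * ∑ y : V, ((b ↑x y + b y ↑x : ℝ) : ℂ) *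
    (f x - (if h : y ∈ U then f ⟨y, h⟩ else 0))

/-- The Dirichlet Laplacian `Δ^D_U`, acting on functions supported in `U`:
`Δ^D_U f(x) = (1/m(x)) ∑_{y ∈ V} b(x,y)(f(x)-f(y))` for `x ∈ U`. -/
noncomputable def opDeltaDir {V : Type*} [Fintype V] [DecidableEq V] (m : V → ℝ) (b : V → V → ℝ)
    (U : Finset V) (f : ↥U → ℂ) (x : ↥U) : ℂ :=
  (1 / (m ↑x : ℂ)) * ∑ y : V, ((b ↑x y : ℝ) : ℂ) *
    (f x - (if h : y ∈ U then f ⟨y, h⟩ else 0))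

lemma innerM_sum_left {W ι : Type*} [Fintype W] (m : W → ℝ) (s : Finset ι)
    (c : ι → ℂ) (w : ι → W → ℂ) (h : W → ℂ) :
    innerM m (fun x => ∑ i ∈ s, c i * w i x) h = ∑ i ∈ s, c i * innerM m (w i) h := by
  unfold innerM
  simp only [Finset.mul_sum, Finset.sum_mul]
  rw [Finset.sum_comm]
  exact Finset.sum_congr rfl fun i _ => Finset.sum_congr rfl fun x _ => by ring

lemma innerM_sum_right {W ι : Type*} [Fintype W] (m : W → ℝ) (s : Finset ι)
    (c : ι → ℂ) (w : ι → W → ℂ) (h : W → ℂ) :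
    innerM m h (fun x => ∑ i ∈ s, c i * w i x)
      = ∑ i ∈ s, (starRingEnd ℂ) (c i) * innerM m h (w i) := by
  unfold innerM
  simp only [map_sum, map_mul, Finset.mul_sum, Finset.sum_mul]
  rw [Finset.sum_comm]
  exact Finset.sum_congr rfl fun i _ => Finset.sum_congr rfl fun x _ => by ring

lemma opS_sum {W ι : Type*} [Fintype W] (m : W → ℝ) (b : W → W → ℝ) (s : Finset ι)
    (c : ι → ℂ) (w : ι → W → ℂ) :
    opS m b (fun x => ∑ i ∈ s, c i * w i x)
      = fun x => ∑ i ∈ s, c i * opS m b (w i) x := by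
  funext x
  unfold opS
  calc (1 / (m x : ℂ)) * ∑ y, ((b x y + b y x : ℝ) : ℂ)
        * ((∑ i ∈ s, c i * w i x) - ∑ i ∈ s, c i * w i y)
      = ∑ y, ∑ i ∈ s, (1 / (m x : ℂ)) * (((b x y + b y x : ℝ) : ℂ)
          * (c i * w i x - c i * w i y)) := by
        rw [Finset.mul_sum]
        refine Finset.sum_congr rfl fun y _ => ?_
        rw [← Finset.sum_sub_distrib, Finset.mul_sum, Finset.mul_sum]
    _ = ∑ i ∈ s, ∑ y, (1 / (m x : ℂ)) * (((b x y + b y x : ℝ) : ℂ)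
          * (c i * w i x - c i * w i y)) := Finset.sum_comm
    _ = ∑ i ∈ s, c i * ((1 / (m x : ℂ)) * ∑ y, ((b x y + b y x : ℝ) : ℂ)
          * (w i x - w i y)) := by
        refine Finset.sum_congr rfl fun i _ => ?_
        rw [Finset.mul_sum, Finset.mul_sum]
        exact Finset.sum_congr rfl fun y _ => by ring

lemma innerM_opS {W : Type*} [Fintype W] (m : W → ℝ) (b : W → W → ℝ)
    (hm : ∀ x, (m x : ℂ) ≠ 0) (f : W → ℂ) :
    innerM m (opS m b f) f
      = ∑ x, ∑ y, ((b x y + b y x : ℝ) : ℂ) * (f x - f y) * (starRingEnd ℂ) (f x) := by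
  unfold innerM opS
  refine Finset.sum_congr rfl fun x _ => ?_
  rw [show ((m x : ℂ)) * ((1 / (m x : ℂ)) * ∑ y, ((b x y + b y x : ℝ) : ℂ) * (f x - f y))
      = ∑ y, ((b x y + b y x : ℝ) : ℂ) * (f x - f y) from by
    rw [one_div, mul_inv_cancel_left₀ (hm x)]]
  rw [Finset.sum_mul]

lemma quad_eq_real {W : Type*} [Fintype W] (b : W → W → ℝ) (hb : ∀ x y, 0 ≤ b x y)
    (f : W → ℂ) :
    ∃ r : ℝ, 0 ≤ r ∧
      ∑ x, ∑ y, ((b x y + b y x : ℝ) : ℂ) * (f x - f y) * (starRingEnd ℂ) (f x) = (r : ℂ) := by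
  refine ⟨(∑ x, ∑ y, (b x y + b y x) * Complex.normSq (f x - f y)) / 2, ?_, ?_⟩
  · have : 0 ≤ ∑ x, ∑ y, (b x y + b y x) * Complex.normSq (f x - f y) :=
      Finset.sum_nonneg fun x _ => Finset.sum_nonneg fun y _ =>
        mul_nonneg (add_nonneg (hb x y) (hb y x)) (Complex.normSq_nonneg _)
    linarith
  · have h1 : (∑ x, ∑ y, ((b x y + b y x : ℝ) : ℂ) * (f x - f y) * (starRingEnd ℂ) (f y))
        = - ∑ x, ∑ y, ((b x y + b y x : ℝ) : ℂ) * (f x - f y) * (starRingEnd ℂ) (f x) := by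
      rw [Finset.sum_comm, ← Finset.sum_neg_distrib]
      refine Finset.sum_congr rfl fun x _ => ?_
      rw [← Finset.sum_neg_distrib]
      refine Finset.sum_congr rfl fun y _ => ?_
      push_cast
      ring
    have h2 : (∑ x, ∑ y, ((b x y + b y x : ℝ) : ℂ) * (f x - f y)
          * ((starRingEnd ℂ) (f x) - (starRingEnd ℂ) (f y)))
        = ((∑ x, ∑ y, (b x y + b y x) * Complex.normSq (f x - f y) : ℝ) : ℂ) := by
      push_cast
      refine Finset.sum_congr rfl fun x _ => Finset.sum_congr rfl fun y _ => ?_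
      rw [← map_sub, show ((b x y : ℂ) + (b y x : ℂ)) * (f x - f y)
          * (starRingEnd ℂ) (f x - f y)
        = ((b x y : ℂ) + (b y x : ℂ)) * ((f x - f y) * (starRingEnd ℂ) (f x - f y)) from by ring,
        Complex.mul_conj]
    have h3 : (∑ x, ∑ y, ((b x y + b y x : ℝ) : ℂ) * (f x - f y)
          * ((starRingEnd ℂ) (f x) - (starRingEnd ℂ) (f y)))
        = (∑ x, ∑ y, ((b x y + b y x : ℝ) : ℂ) * (f x - f y) * (starRingEnd ℂ) (f x))
          - ∑ x, ∑ y, ((b x y + b y x : ℝ) : ℂ) * (f x - f y) * (starRingEnd ℂ) (f y) := by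
      rw [← Finset.sum_sub_distrib]
      refine Finset.sum_congr rfl fun x _ => ?_
      rw [← Finset.sum_sub_distrib]
      exact Finset.sum_congr rfl fun y _ => by ring
    rw [h1, h2] at h3
    rw [Complex.ofReal_div, Complex.ofReal_ofNat]
    linear_combination (-1/2 : ℂ) * h3

lemma innerM_self {W : Type*} [Fintype W] (m : W → ℝ) (f : W → ℂ) :
    innerM m f f = ((∑ x, m x * Complex.normSq (f x) : ℝ) : ℂ) := by
  unfold innerM
  push_cast
  refine Finset.sum_congr rfl fun x _ => ?_
  rw [mul_assoc, Complex.mul_conj]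

/-- let `G` be a finite directed weighted graph with `n` vertices satisfying
the Kirchhoff assumption, and let `G₁` be obtained from `G` by attaching a further weighted
graph to `G` by a single edge, so that `G₁` satisfies the Kirchhoff assumption, contains
`G` as a subgraph (on vertex set `VG`), and is `G`-flower-like with respect to `G` (the
attached part `P` meets `G` in exactly one vertex and its interior vertices are not
adjacent to `G`).  Then `λ_k(S_{G₁}) ≤ λ_k(S_G)` for `k = 1, …, n`. -/
theorem stmt12 {V : Type*} [Fintype V] (m : V → ℝ) (b : V → V → ℝ)
    -- `G₁` is the ambient graph, on vertex set `V`, with weights `b`, `m`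
    (hm : ∀ x, 0 < m x) (hb : ∀ x y, 0 ≤ b x y) (hloop : ∀ x, b x x = 0)
    (hconn1 : ConnectedGraph b) (hkirch1 : Kirchhoff b)
    -- `G` is the subgraph of `G₁` induced on `VG`; it is connected and satisfies the
    -- Kirchhoff assumption
    (VG : Finset V) (hconnG : ConnOn b VG)
    (hkirchG : ∀ x ∈ VG, ∑ y ∈ VG, b x y = ∑ y ∈ VG, b y x)
    -- `G₁` is `G`-flower-like with respect to `G`, with a single petal `P` (the attached
    -- graph together with the attaching vertex)
    (P : Finset V)
    (hcover : (Set.univ : Set V) = ↑VG ∪ interiorSet b ↑P)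
    (hmeet : ∃ x0 : V, (↑VG : Set V) ∩ ↑P = {x0})
    (N n : ℕ) (hN : N = Fintype.card V) (hn : n = VG.card) (hnN : n ≤ N)
    (μ1 : Fin N → ℝ) (μG : Fin n → ℝ)
    (hμ1 : IsMonoEigenListing m (opS m b) μ1)
    (hμG : IsMonoEigenListing (fun x : ↥VG => m ↑x) (opSsub m b VG) μG) :
    ∀ k : Fin n, μ1 ⟨k.1, by have := k.isLt; omega⟩ ≤ μG k := by
  classical
  intro k
  obtain ⟨hmono1, u, huorth, hueig⟩ := hμ1
  obtain ⟨hmonoG, v, hvorth, hveig⟩ := hμG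
  obtain ⟨x0, hx0⟩ := hmeet
  have hm' : ∀ x : V, ((m x : ℝ) : ℂ) ≠ 0 := fun x => Complex.ofReal_ne_zero.mpr (hm x).ne'
  have hx0m : x0 ∈ (↑VG : Set V) ∩ ↑P := by rw [hx0]; rfl
  have hx0VG : x0 ∈ VG := hx0m.1
  -- the "fold" map: identity on VG, everything else sent to x0
  set σ : V → ↥VG := fun x => if h : x ∈ VG then ⟨x, h⟩ else ⟨x0, hx0VG⟩ with hσdef
  have hσVG : ∀ x : ↥VG, σ ↑x = x := fun x => by simp [hσdef, x.2]
  have hσP : ∀ x ∈ P, σ x = ⟨x0, hx0VG⟩ := by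
    intro x hxP
    by_cases h : x ∈ VG
    · have hx : x ∈ ({x0} : Set V) := by
        rw [← hx0]; exact ⟨Finset.mem_coe.mpr h, Finset.mem_coe.mpr hxP⟩
      simp only [hσdef, dif_pos h]
      exact Subtype.ext hx
    · simp [hσdef, h]
  -- every edge of the graph lies within VG or within P
  have hedge : ∀ x y : V, b x y + b y x ≠ 0 → (x ∈ VG ∧ y ∈ VG) ∨ (x ∈ P ∧ y ∈ P) := by
    intro x y hxy
    have hnbr : Nbr b x y := by
      rcases lt_or_eq_of_le (hb x y) with h | h
      · exact Or.inl h
      · rcases lt_or_eq_of_le (hb y x) with h2 | h2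
        · exact Or.inr h2
        · exact absurd (by rw [← h, ← h2]; ring) hxy
    have hnbr' : Nbr b y x := hnbr.symm
    by_cases hx : x ∈ VG
    · by_cases hy : y ∈ VG
      · exact Or.inl ⟨hx, hy⟩
      · have hyint : y ∈ interiorSet b ↑P := by
          have hy' : y ∈ (Set.univ : Set V) := trivial
          rw [hcover] at hy'
          exact hy'.resolve_left fun h => hy (Finset.mem_coe.mp h)
        exact Or.inr ⟨Finset.mem_coe.mp (hyint.2 x hnbr'), Finset.mem_coe.mp hyint.1⟩
    · have hxint : x ∈ interiorSet b ↑P := by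
        have hx' : x ∈ (Set.univ : Set V) := trivial
        rw [hcover] at hx'
        exact hx'.resolve_left fun h => hx (Finset.mem_coe.mp h)
      exact Or.inr ⟨Finset.mem_coe.mp hxint.1, Finset.mem_coe.mp (hxint.2 y hnbr)⟩
  -- quadratic form of the big graph restricted to folded functions
  have hQ : ∀ g : ↥VG → ℂ,
      (∑ x : V, ∑ y : V, ((b x y + b y x : ℝ) : ℂ) * (g (σ x) - g (σ y))
        * (starRingEnd ℂ) (g (σ x)))
      = ∑ x : ↥VG, ∑ y : ↥VG, ((b ↑x ↑y + b ↑y ↑x : ℝ) : ℂ) * (g x - g y)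
        * (starRingEnd ℂ) (g x) := by
    intro g
    have hterm0 : ∀ x y : V, ¬(x ∈ VG ∧ y ∈ VG) →
        ((b x y + b y x : ℝ) : ℂ) * (g (σ x) - g (σ y)) * (starRingEnd ℂ) (g (σ x)) = 0 := by
      intro x y hxy
      by_cases ha : b x y + b y x = 0
      · rw [ha]; simp
      · rcases hedge x y ha with h | h
        · exact absurd h hxy
        · rw [hσP x h.1, hσP y h.2]; simp
    have step1 : (∑ x : V, ∑ y : V, ((b x y + b y x : ℝ) : ℂ) * (g (σ x) - g (σ y))
          * (starRingEnd ℂ) (g (σ x)))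
        = ∑ x ∈ VG, ∑ y ∈ VG, ((b x y + b y x : ℝ) : ℂ) * (g (σ x) - g (σ y))
          * (starRingEnd ℂ) (g (σ x)) := by
      rw [← Finset.sum_subset (Finset.subset_univ VG)
        (fun x _ hx => Finset.sum_eq_zero fun y _ => hterm0 x y fun hc => hx hc.1)]
      refine Finset.sum_congr rfl fun x hx => ?_
      rw [← Finset.sum_subset (Finset.subset_univ VG)
        (fun y _ hy => hterm0 x y fun hc => hy hc.2)]
    rw [step1]
    rw [← Finset.sum_coe_sort VG (fun x => ∑ y ∈ VG, ((b x y + b y x : ℝ) : ℂ)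
      * (g (σ x) - g (σ y)) * (starRingEnd ℂ) (g (σ x)))]
    refine Finset.sum_congr rfl fun x _ => ?_
    rw [← Finset.sum_coe_sort VG (fun y => ((b ↑x y + b y ↑x : ℝ) : ℂ)
      * (g (σ ↑x) - g (σ y)) * (starRingEnd ℂ) (g (σ ↑x)))]
    refine Finset.sum_congr rfl fun y _ => ?_
    rw [hσVG, hσVG]
  -- comparison of norms
  have hNorm : ∀ g : ↥VG → ℂ,
      (∑ x : ↥VG, m ↑x * Complex.normSq (g x)) ≤ ∑ x : V, m x * Complex.normSq (g (σ x)) := by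
    intro g
    have e : (∑ x : ↥VG, m ↑x * Complex.normSq (g x))
        = ∑ x ∈ VG, m x * Complex.normSq (g (σ x)) := by
      rw [← Finset.sum_coe_sort VG (fun x => m x * Complex.normSq (g (σ x)))]
      exact Finset.sum_congr rfl fun x _ => by rw [hσVG]
    rw [e]
    exact Finset.sum_le_sum_of_subset_of_nonneg (Finset.subset_univ VG)
      (fun x _ _ => mul_nonneg (hm x).le (Complex.normSq_nonneg _))
  -- indices
  have hK1n : (k : ℕ) < n := k.isLt
  have hK1N : (k : ℕ) < N := lt_of_lt_of_le hK1n hnN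
  set K1 : ℕ := (k : ℕ) with hK1def
  set J : Fin (K1 + 1) → Fin n := fun j => ⟨j.1, by omega⟩ with hJdef
  set I : Fin K1 → Fin N := fun i => ⟨i.1, by omega⟩ with hIdef
  -- find a nonzero combination of the first K1+1 eigenfunctions of the subgraph whose
  -- folding is orthogonal to the first K1 eigenfunctions of the big graph
  set M : Matrix (Fin K1) (Fin (K1 + 1)) ℂ :=
    Matrix.of fun i j => innerM m (fun x => v (J j) (σ x)) (u (I i)) with hMdef
  have hnotinj : ¬ Function.Injective M.mulVecLin := by
    intro h
    have hle := LinearMap.finrank_le_finrank_of_injective h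
    rw [Module.finrank_fintype_fun_eq_card, Module.finrank_fintype_fun_eq_card,
      Fintype.card_fin, Fintype.card_fin] at hle
    omega
  have hker : LinearMap.ker M.mulVecLin ≠ ⊥ := fun h => hnotinj (LinearMap.ker_eq_bot.mp h)
  obtain ⟨c, hcker, hc0⟩ := Submodule.exists_mem_ne_zero_of_ne_bot hker
  have hTc : ∀ i : Fin K1, ∑ j, M i j * c j = 0 := by
    intro i
    have := LinearMap.mem_ker.mp hcker
    have := congrFun (congrArg (fun z => z) this) i
    simpa [Matrix.mulVecLin_apply, Matrix.mulVec, dotProduct] using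
      congrFun (LinearMap.mem_ker.mp hcker) i
  -- the test functions
  set g : ↥VG → ℂ := fun z => ∑ j, c j * v (J j) z with hgdef
  set f : V → ℂ := fun x => g (σ x) with hfdef
  -- expansions and computations
    -- orthogonality of f to the first K1 eigenfunctions of the big graph
  have horth : ∀ i : Fin K1, innerM m f (u (I i)) = 0 := by
    intro i
    calc innerM m f (u (I i))
        = ∑ j, c j * innerM m (fun x => v (J j) (σ x)) (u (I i)) :=
          innerM_sum_left m Finset.univ c (fun j x => v (J j) (σ x)) (u (I i))
      _ = ∑ j, M i j * c j := Finset.sum_congr rfl fun j _ => mul_comm _ _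
      _ = 0 := hTc i
  -- u is a basis
  have hNpos : 0 < N := by rw [hN]; exact Fintype.card_pos_iff.mpr ⟨x0⟩
  have hFinN : Nonempty (Fin N) := ⟨⟨0, hNpos⟩⟩
  have hli : LinearIndependent ℂ u := by
    rw [Fintype.linearIndependent_iff]
    intro gc hgc i
    have hfun : (fun x => ∑ j, gc j * u j x) = (0 : V → ℂ) := by
      funext x
      simpa [Finset.sum_apply] using congrFun hgc x
    have h1 := innerM_sum_left m Finset.univ gc u (u i)
    rw [hfun] at h1
    have h2 : innerM m (0 : V → ℂ) (u i) = 0 := by simp [innerM]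
    rw [h2] at h1
    simp only [huorth, mul_ite, mul_one, mul_zero, Finset.sum_ite_eq',
      Finset.mem_univ, if_true] at h1
    exact h1.symm
  have hcard : Fintype.card (Fin N) = Module.finrank ℂ (V → ℂ) := by
    rw [Fintype.card_fin, Module.finrank_fintype_fun_eq_card, hN]
  have hspan : Submodule.span ℂ (Set.range u) = ⊤ := by
    rw [← coe_basisOfLinearIndependentOfCardEqFinrank hli hcard]
    exact Module.Basis.span_eq _
  have hfmem : f ∈ Submodule.span ℂ (Set.range u) := by rw [hspan]; trivial
  obtain ⟨d, hd⟩ := (Submodule.mem_span_range_iff_exists_fun ℂ).mp hfmem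
  have hd' : (fun x => ∑ i, d i * u i x) = f := by
    funext x
    simpa [Finset.sum_apply] using congrFun hd x
  -- coefficients of f in the basis u
  have hcoef : ∀ i : Fin N, innerM m f (u i) = d i := by
    intro i
    rw [← hd']
    rw [innerM_sum_left m Finset.univ d u (u i)]
    simp [huorth, mul_ite]
  have hd0 : ∀ i : Fin N, (i : ℕ) < K1 → d i = 0 := by
    intro i hi
    have hIi : I ⟨(i : ℕ), hi⟩ = i := Fin.ext rfl
    rw [← hcoef i, ← hIi]
    exact horth _
  -- spectral computation for f
  have hiuf : ∀ i, innerM m (u i) f = (starRingEnd ℂ) (d i) := by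
    intro i
    rw [← hd', innerM_sum_right m Finset.univ d u (u i)]
    simp [huorth, mul_ite]
  have hSf : opS m b f = fun x => ∑ i, (d i * ((μ1 i : ℝ) : ℂ)) * u i x := by
    rw [← hd']
    rw [opS_sum m b Finset.univ d u]
    funext x
    refine Finset.sum_congr rfl fun i _ => ?_
    simp only [hueig i]
    ring
  have hA : innerM m (opS m b f) f = ((∑ i, μ1 i * Complex.normSq (d i) : ℝ) : ℂ) := by
    rw [hSf]
    rw [innerM_sum_left m Finset.univ (fun i => d i * ((μ1 i : ℝ) : ℂ)) u f]
    push_cast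
    refine Finset.sum_congr rfl fun i _ => ?_
    rw [hiuf i, ← Complex.mul_conj]
    ring
  have hPf : innerM m f f = ((∑ i, Complex.normSq (d i) : ℝ) : ℂ) := by
    nth_rewrite 1 [← hd']
    rw [innerM_sum_left m Finset.univ d u f]
    push_cast
    refine Finset.sum_congr rfl fun i _ => ?_
    rw [hiuf i, Complex.mul_conj]
  have hDval : (∑ x, m x * Complex.normSq (f x)) = ∑ i, Complex.normSq (d i) := by
    have := (innerM_self m f).symm.trans hPf
    exact_mod_cast this
  -- G-side spectral computations
  set mG : ↥VG → ℝ := fun x => m ↑x with hmGdef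
  have hmG' : ∀ x : ↥VG, ((mG x : ℝ) : ℂ) ≠ 0 := fun x => Complex.ofReal_ne_zero.mpr (hm ↑x).ne'
  have hvorth' : ∀ j j' : Fin (K1 + 1),
      innerM mG (v (J j)) (v (J j')) = if j = j' then 1 else 0 := by
    intro j j'
    rw [hvorth (J j) (J j')]
    by_cases h : j = j'
    · simp [h]
    · have hne : J j ≠ J j' := by
        intro he
        have hv := congrArg Fin.val he
        simp only [hJdef] at hv
        exact h (Fin.ext hv)
      simp [h, hne]
  have hivg : ∀ j0, innerM mG (v (J j0)) g = (starRingEnd ℂ) (c j0) := by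
    intro j0
    have h2 : innerM mG (v (J j0)) g
        = ∑ j, (starRingEnd ℂ) (c j) * innerM mG (v (J j0)) (v (J j)) :=
      innerM_sum_right mG Finset.univ c (fun j => v (J j)) (v (J j0))
    rw [h2]
    simp [hvorth', mul_ite]
  have hSg : opSsub m b VG g = fun z => ∑ j, (c j * ((μG (J j) : ℝ) : ℂ)) * v (J j) z := by
    have h1 : opSsub m b VG g = fun z => ∑ j, c j * opSsub m b VG (v (J j)) z :=
      opS_sum mG (fun x y : ↥VG => b ↑x ↑y) Finset.univ c (fun j => v (J j))
    rw [h1]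
    funext z
    refine Finset.sum_congr rfl fun j _ => ?_
    simp only [hveig (J j)]
    ring
  have hAG : innerM mG (opSsub m b VG g) g
      = ((∑ j, μG (J j) * Complex.normSq (c j) : ℝ) : ℂ) := by
    rw [hSg]
    rw [innerM_sum_left mG Finset.univ (fun j => c j * ((μG (J j) : ℝ) : ℂ)) (fun j => v (J j)) g]
    push_cast
    refine Finset.sum_congr rfl fun j _ => ?_
    rw [hivg j, ← Complex.mul_conj]
    ring
  have hPG : innerM mG g g = ((∑ j, Complex.normSq (c j) : ℝ) : ℂ) := by
    have h1 : innerM mG g g = ∑ j, c j * innerM mG (v (J j)) g :=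
      innerM_sum_left mG Finset.univ c (fun j => v (J j)) g
    rw [h1]
    push_cast
    refine Finset.sum_congr rfl fun j _ => ?_
    rw [hivg j, Complex.mul_conj]
  have hCval : (∑ x : ↥VG, mG x * Complex.normSq (g x)) = ∑ j, Complex.normSq (c j) := by
    have := (innerM_self mG g).symm.trans hPG
    exact_mod_cast this
  -- the bridge: quadratic forms agree
  have hbridge : innerM m (opS m b f) f = innerM mG (opSsub m b VG g) g := by
    calc innerM m (opS m b f) f
        = ∑ x : V, ∑ y : V, ((b x y + b y x : ℝ) : ℂ) * (f x - f y)
          * (starRingEnd ℂ) (f x) := innerM_opS m b hm' f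
      _ = ∑ x : V, ∑ y : V, ((b x y + b y x : ℝ) : ℂ) * (g (σ x) - g (σ y))
          * (starRingEnd ℂ) (g (σ x)) := rfl
      _ = ∑ x : ↥VG, ∑ y : ↥VG, ((b ↑x ↑y + b ↑y ↑x : ℝ) : ℂ) * (g x - g y)
          * (starRingEnd ℂ) (g x) := hQ g
      _ = innerM mG (opSsub m b VG g) g :=
          (innerM_opS mG (fun x y : ↥VG => b ↑x ↑y) hmG' g).symm
  -- extract real identities and inequalities
  have hmain : (∑ i, μ1 i * Complex.normSq (d i)) = ∑ j, μG (J j) * Complex.normSq (c j) := by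
    have := hA.symm.trans (hbridge.trans hAG)
    exact_mod_cast this
  have hnonneg : 0 ≤ ∑ j, μG (J j) * Complex.normSq (c j) := by
    obtain ⟨r, hr0, hr⟩ := quad_eq_real (fun x y : ↥VG => b ↑x ↑y) (fun x y => hb ↑x ↑y) g
    have h1 : innerM mG (opSsub m b VG g) g = (r : ℂ) :=
      (innerM_opS mG (fun x y : ↥VG => b ↑x ↑y) hmG' g).trans hr
    have h2 : ((∑ j, μG (J j) * Complex.normSq (c j) : ℝ) : ℂ) = (r : ℂ) := hAG.symm.trans h1
    rw [Complex.ofReal_inj] at h2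
    linarith
  have hCpos : 0 < ∑ j, Complex.normSq (c j) := by
    obtain ⟨j0, hj0⟩ := Function.ne_iff.mp hc0
    exact Finset.sum_pos' (fun j _ => Complex.normSq_nonneg _)
      ⟨j0, Finset.mem_univ _, Complex.normSq_pos.mpr hj0⟩
  have hCD : (∑ j, Complex.normSq (c j)) ≤ ∑ i, Complex.normSq (d i) := by
    rw [← hCval, ← hDval]
    exact hNorm g
  have e1 : μ1 ⟨K1, hK1N⟩ * (∑ i, Complex.normSq (d i))
      ≤ ∑ i, μ1 i * Complex.normSq (d i) := by
    rw [Finset.mul_sum]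
    refine Finset.sum_le_sum fun i _ => ?_
    by_cases hi : (i : ℕ) < K1
    · rw [hd0 i hi]; simp
    · exact mul_le_mul_of_nonneg_right (hmono1 (not_lt.mp hi)) (Complex.normSq_nonneg _)
  have e3 : (∑ j, μG (J j) * Complex.normSq (c j))
      ≤ μG k * ∑ j, Complex.normSq (c j) := by
    rw [Finset.mul_sum]
    refine Finset.sum_le_sum fun j _ => ?_
    exact mul_le_mul_of_nonneg_right (hmonoG (Nat.lt_succ_iff.mp j.isLt)) (Complex.normSq_nonneg _)
  have hμGk0 : 0 ≤ μG k := by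
    by_contra h
    push_neg at h
    nlinarith [mul_neg_of_neg_of_pos h hCpos]
  have hSD : 0 < ∑ i, Complex.normSq (d i) := lt_of_lt_of_le hCpos hCD
  have hfinal : μ1 ⟨K1, hK1N⟩ * (∑ i, Complex.normSq (d i))
      ≤ μG k * ∑ i, Complex.normSq (d i) := by
    calc μ1 ⟨K1, hK1N⟩ * (∑ i, Complex.normSq (d i))
        ≤ ∑ i, μ1 i * Complex.normSq (d i) := e1
      _ = ∑ j, μG (J j) * Complex.normSq (c j) := hmain
      _ ≤ μG k * ∑ j, Complex.normSq (c j) := e3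
      _ ≤ μG k * ∑ i, Complex.normSq (d i) := mul_le_mul_of_nonneg_left hCD hμGk0
  show μ1 ⟨K1, hK1N⟩ ≤ μG k
  exact le_of_mul_le_mul_right hfinal hSD
end

section
/- Let H be a connected subgraph of a finite connected directed weighted graph G satisfying the Kirchhoff assumption, with #V_G = n and #V_H = r. Then for every 1 ≤ k ≤ r, λ_{k+n−r}(S_G) ≥ max( λ_k(S_H), λ_k(S^D_H) ), where eigenvalues are listed increasingly with multiplicity. -/
open Finset

/-!
Extension by zero embeds functions on `V_H` isometrically into functions on `V_G`, and on such
functions the quadratic form of `S_G` dominates those of `S_H` and `S^D_H`: it equals the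
Dirichlet form, and exceeds the form of `S_H` by the nonnegative boundary terms
`∑_{x ∈ V_H} ∑_{y ∉ V_H} a(x,y) |f(x)|²`. Interlacing then follows from the min–max dimension
count: the eigenfunctions of the subgraph operator for `λ_k, …, λ_r`, extended by zero, span a
space of dimension `r - k + 1`, which meets the orthogonal complement of the `r - k` top
eigenfunctions of `S_G` nontrivially. For `f` in the intersection,
`λ_k ‖f‖² ≤ ⟨T f, f⟩ ≤ ⟨S_G f, f⟩ ≤ λ_{k+n-r}(S_G) ‖f‖²`.
-/

section WeightedInner

variable {W : Type*} [Fintype W] (m : W → ℝ)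

def OrthonormalM {ι : Type*} [DecidableEq ι] (u : ι → W → ℂ) : Prop :=
  ∀ i j, innerM m (u i) (u j) = if i = j then 1 else 0

variable {m}

lemma innerM_zero_left (g : W → ℂ) : innerM m 0 g = 0 := by
  simp [innerM]

lemma innerM_sum_smul_left {ι : Type*} [Fintype ι] (c : ι → ℂ) (f : ι → W → ℂ) (g : W → ℂ) :
    innerM m (∑ i, c i • f i) g = ∑ i, c i * innerM m (f i) g := by
  simp only [innerM, Finset.sum_apply, Pi.smul_apply, smul_eq_mul, Finset.mul_sum,
    Finset.sum_mul]
  rw [Finset.sum_comm]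
  exact Finset.sum_congr rfl fun _ _ => Finset.sum_congr rfl fun _ _ => by ring

lemma innerM_sum_smul_right {ι : Type*} [Fintype ι] (c : ι → ℂ) (f : ι → W → ℂ) (g : W → ℂ) :
    innerM m g (∑ i, c i • f i) = ∑ i, starRingEnd ℂ (c i) * innerM m g (f i) := by
  simp only [innerM, Finset.sum_apply, Pi.smul_apply, smul_eq_mul, map_sum, map_mul,
    Finset.mul_sum]
  rw [Finset.sum_comm]
  exact Finset.sum_congr rfl fun _ _ => Finset.sum_congr rfl fun _ _ => by ring

namespace OrthonormalM

variable {ι : Type*} [DecidableEq ι] {u : ι → W → ℂ}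

lemma comp {κ : Type*} [DecidableEq κ] (hu : OrthonormalM m u) {e : κ → ι}
    (he : Function.Injective e) : OrthonormalM m (fun i => u (e i)) := by
  intro i j
  simp only [hu (e i) (e j), he.eq_iff]

variable [Fintype ι]

lemma innerM_sum_smul_left (hu : OrthonormalM m u) (c : ι → ℂ) (j : ι) :
    innerM m (∑ i, c i • u i) (u j) = c j := by
  simp [_root_.innerM_sum_smul_left, hu _ j]

lemma innerM_sum_smul (hu : OrthonormalM m u) (c e : ι → ℂ) :
    innerM m (∑ i, c i • u i) (∑ i, e i • u i) = ∑ i, c i * starRingEnd ℂ (e i) := by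
  rw [_root_.innerM_sum_smul_left]
  refine Finset.sum_congr rfl fun i _ => ?_
  simp [innerM_sum_smul_right, hu i _, mul_comm]

lemma re_innerM_sum_smul_self (hu : OrthonormalM m u) (c : ι → ℂ) :
    (innerM m (∑ i, c i • u i) (∑ i, c i • u i)).re = ∑ i, Complex.normSq (c i) := by
  simp [hu.innerM_sum_smul, Complex.mul_conj]

lemma linearIndependent (hu : OrthonormalM m u) : LinearIndependent ℂ u := by
  rw [Fintype.linearIndependent_iff]
  intro c hc j
  rw [← hu.innerM_sum_smul_left c j, hc, innerM_zero_left]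

lemma sum_innerM_smul (hu : OrthonormalM m u) (hcard : Fintype.card ι = Fintype.card W)
    (f : W → ℂ) : ∑ t, innerM m f (u t) • u t = f := by
  have hspan := hu.linearIndependent.span_eq_top_of_card_eq_finrank'
    (hcard.trans (Module.finrank_fintype_fun_eq_card ℂ).symm)
  have hf : f ∈ Submodule.span ℂ (Set.range u) := hspan ▸ Submodule.mem_top
  obtain ⟨c, rfl⟩ := (Submodule.mem_span_range_iff_exists_fun ℂ).mp hf
  simp only [hu.innerM_sum_smul_left]

variable {S : (W → ℂ) → (W → ℂ)} {μ : ι → ℝ}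

lemma re_innerM_apply_sum_smul (hu : OrthonormalM m u) (hS : IsLinearMap ℂ S)
    (hev : ∀ i, S (u i) = fun x => (μ i : ℂ) * u i x) (c : ι → ℂ) :
    (innerM m (S (∑ i, c i • u i)) (∑ i, c i • u i)).re = ∑ i, μ i * Complex.normSq (c i) := by
  have hSsum : S (∑ i, c i • u i) = ∑ i, (c i * μ i) • u i := by
    rw [← IsLinearMap.mk'_apply hS, map_sum]
    refine Finset.sum_congr rfl fun i _ => ?_
    rw [map_smul, IsLinearMap.mk'_apply, hev]
    funext x
    simp only [Pi.smul_apply, smul_eq_mul]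
    ring
  rw [hSsum, hu.innerM_sum_smul, Complex.re_sum]
  refine Finset.sum_congr rfl fun i _ => ?_
  rw [mul_right_comm, Complex.mul_conj, ← Complex.ofReal_mul, Complex.ofReal_re, mul_comm]

lemma le_re_innerM_apply_sum_smul (hu : OrthonormalM m u) (hS : IsLinearMap ℂ S)
    (hev : ∀ i, S (u i) = fun x => (μ i : ℂ) * u i x) {lam : ℝ} (hlam : ∀ i, lam ≤ μ i)
    (c : ι → ℂ) :
    lam * (innerM m (∑ i, c i • u i) (∑ i, c i • u i)).re
      ≤ (innerM m (S (∑ i, c i • u i)) (∑ i, c i • u i)).re := by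
  rw [hu.re_innerM_apply_sum_smul hS hev, hu.re_innerM_sum_smul_self, Finset.mul_sum]
  exact Finset.sum_le_sum fun i _ => mul_le_mul_of_nonneg_right (hlam i) (Complex.normSq_nonneg _)

lemma re_innerM_apply_le (hu : OrthonormalM m u) (hS : IsLinearMap ℂ S)
    (hev : ∀ i, S (u i) = fun x => (μ i : ℂ) * u i x)
    (hcard : Fintype.card ι = Fintype.card W) {lam : ℝ} (f : W → ℂ)
    (hf : ∀ t, lam < μ t → innerM m f (u t) = 0) :
    (innerM m (S f) f).re ≤ lam * (innerM m f f).re := by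
  rw [← hu.sum_innerM_smul hcard f, hu.re_innerM_apply_sum_smul hS hev,
    hu.re_innerM_sum_smul_self, Finset.mul_sum]
  refine Finset.sum_le_sum fun t _ => ?_
  by_cases ht : μ t ≤ lam
  · exact mul_le_mul_of_nonneg_right ht (Complex.normSq_nonneg _)
  · simp [hf t (not_le.mp ht)]

end OrthonormalM

lemma exists_ne_zero_innerM_sum_smul_eq_zero {ι κ : Type*} [Fintype ι] [Fintype κ]
    (w : ι → W → ℂ) (y : κ → W → ℂ) (hcard : Fintype.card κ < Fintype.card ι) :
    ∃ c : ι → ℂ, c ≠ 0 ∧ ∀ t, innerM m (∑ i, c i • w i) (y t) = 0 := by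
  let M : Matrix κ ι ℂ := fun t i => innerM m (w i) (y t)
  obtain ⟨c, hc, hc0⟩ := Submodule.exists_mem_ne_zero_of_ne_bot
    (LinearMap.ker_ne_bot_of_finrank_lt (f := M.mulVecLin) (by simpa using hcard))
  refine ⟨c, hc0, fun t => ?_⟩
  have hMc := congrFun (LinearMap.mem_ker.mp hc) t
  rw [Matrix.mulVecLin_apply] at hMc
  rw [innerM_sum_smul_left]
  simpa [M, Matrix.mulVec, dotProduct, mul_comm] using hMc

end WeightedInner

theorem IsMonoEigenListing.le_of_compression {W W' : Type*} [Fintype W] [Fintype W']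
    {m : W → ℝ} {m' : W' → ℝ} {S : (W → ℂ) → (W → ℂ)} {T : (W' → ℂ) → (W' → ℂ)}
    {E : (W' → ℂ) → (W → ℂ)} {n r : ℕ} {ν : Fin r → ℝ} {μ : Fin n → ℝ}
    (hν : IsMonoEigenListing m' T ν) (hμ : IsMonoEigenListing m S μ)
    (hS : IsLinearMap ℂ S) (hT : IsLinearMap ℂ T) (hE : IsLinearMap ℂ E)
    (hEnorm : ∀ g, innerM m (E g) (E g) = innerM m' g g)
    (hform : ∀ g, (innerM m' (T g) g).re ≤ (innerM m (S (E g)) (E g)).re)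
    (hn : n = Fintype.card W) (k : Fin r) (j : Fin n) (hkj : n + k ≤ r + j) :
    ν k ≤ μ j := by
  obtain ⟨hμmono, u, hu, huev⟩ := hμ
  obtain ⟨hνmono, v, hv, hvev⟩ := hν
  have hcard : Fintype.card (Finset.Ioi j) < Fintype.card (Finset.Ici k) := by
    simp only [Fintype.card_coe, Fin.card_Ioi, Fin.card_Ici]
    omega
  obtain ⟨c, hc0, hc⟩ := exists_ne_zero_innerM_sum_smul_eq_zero (m := m)
    (fun i : Finset.Ici k => E (v i)) (fun t : Finset.Ioi j => u t) hcard
  have hvI : OrthonormalM m' (fun i : Finset.Ici k => v i) :=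
    OrthonormalM.comp hv Subtype.val_injective
  set g := ∑ i : Finset.Ici k, c i • v i
  have hEg : E g = ∑ i : Finset.Ici k, c i • E (v i) := by
    rw [← IsLinearMap.mk'_apply hE, map_sum]
    simp only [map_smul, IsLinearMap.mk'_apply]
  have hg : 0 < (innerM m' g g).re := by
    rw [hvI.re_innerM_sum_smul_self]
    obtain ⟨i, hi⟩ := Function.ne_iff.mp hc0
    exact Finset.sum_pos' (fun _ _ => Complex.normSq_nonneg _)
      ⟨i, Finset.mem_univ _, Complex.normSq_pos.mpr hi⟩
  have hEg_perp : ∀ t, μ j < μ t → innerM m (E g) (u t) = 0 := fun t ht =>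
    hEg ▸ hc ⟨t, Finset.mem_Ioi.mpr (hμmono.reflect_lt ht)⟩
  refine le_of_mul_le_mul_right ?_ hg
  calc ν k * (innerM m' g g).re
      ≤ (innerM m' (T g) g).re :=
        hvI.le_re_innerM_apply_sum_smul hT (fun i => hvev i)
          (fun i => hνmono (Finset.mem_Ici.mp i.2)) c
    _ ≤ (innerM m (S (E g)) (E g)).re := hform g
    _ ≤ μ j * (innerM m (E g) (E g)).re :=
        OrthonormalM.re_innerM_apply_le hu hS huev (by simp [hn]) (E g) hEg_perp
    _ = μ j * (innerM m' g g).re := by rw [hEnorm]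

lemma isLinearMap_opS {W : Type*} [Fintype W] (m : W → ℝ) (b : W → W → ℝ) :
    IsLinearMap ℂ (opS m b) := by
  constructor
  · intro f g
    funext x
    simp only [opS, Pi.add_apply, ← mul_add, ← Finset.sum_add_distrib]
    exact congrArg _ (Finset.sum_congr rfl fun _ _ => by ring)
  · intro a f
    funext x
    simp only [opS, Pi.smul_apply, smul_eq_mul, Finset.mul_sum]
    exact Finset.sum_congr rfl fun _ _ => by ring

section Subgraph

variable {V : Type*} [DecidableEq V] (U : Finset V)

def extendByZero (g : ↥U → ℂ) : V → ℂ :=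
  fun y => if h : y ∈ U then g ⟨y, h⟩ else 0

variable {U}

@[simp]
lemma extendByZero_coe (g : ↥U → ℂ) (x : ↥U) : extendByZero U g x = g x := by
  simp [extendByZero]

lemma extendByZero_of_notMem (g : ↥U → ℂ) {y : V} (hy : y ∉ U) : extendByZero U g y = 0 := by
  simp [extendByZero, hy]

lemma isLinearMap_extendByZero : IsLinearMap ℂ (extendByZero (V := V) U) := by
  constructor <;> intros <;> funext y <;> by_cases hy : y ∈ U <;> simp [extendByZero, hy]

variable [Fintype V] (m : V → ℝ) (b : V → V → ℝ)

lemma innerM_extendByZero_right (F : V → ℂ) (g : ↥U → ℂ) :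
    innerM m F (extendByZero U g) = innerM (fun x : ↥U => m x) (fun x => F x) g := by
  rw [innerM, innerM, ← Finset.sum_subset (Finset.subset_univ U)
    (fun y _ hy => by simp [extendByZero_of_notMem g hy]), ← Finset.sum_coe_sort U]
  simp only [extendByZero_coe]

lemma innerM_extendByZero (g : ↥U → ℂ) :
    innerM m (extendByZero U g) (extendByZero U g) = innerM (fun x : ↥U => m x) g g := by
  simp only [innerM_extendByZero_right, extendByZero_coe]

lemma opSDir_eq_opS_extendByZero (g : ↥U → ℂ) :
    opSDir m b U g = fun x : ↥U => opS m b (extendByZero U g) x := by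
  funext x
  simp only [opS, extendByZero_coe]
  rfl

lemma isLinearMap_opSDir : IsLinearMap ℂ (opSDir m b U) := by
  have hS := isLinearMap_opS m b
  have hE := isLinearMap_extendByZero (U := U)
  constructor <;> intros <;> funext x <;>
    simp [opSDir_eq_opS_extendByZero, hE.map_add, hE.map_smul, hS.map_add, hS.map_smul]

lemma innerM_opSDir (g : ↥U → ℂ) :
    innerM (fun x : ↥U => m x) (opSDir m b U g) g
      = innerM m (opS m b (extendByZero U g)) (extendByZero U g) := by
  rw [innerM_extendByZero_right, opSDir_eq_opS_extendByZero]

lemma opS_extendByZero_apply (g : ↥U → ℂ) (x : ↥U) :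
    opS m b (extendByZero U g) x
      = opSsub m b U g x
        + 1 / (m x : ℂ) * ((∑ y ∈ Finset.univ \ U, (b x y + b y x) : ℝ) : ℂ) * g x := by
  have hout : ∀ y ∈ Finset.univ \ U, ((b x y + b y x : ℝ) : ℂ) * (g x - extendByZero U g y)
      = ((b x y + b y x : ℝ) : ℂ) * g x := fun y hy => by
    rw [extendByZero_of_notMem g (Finset.mem_sdiff.mp hy).2, sub_zero]
  simp only [opS, opSsub, extendByZero_coe]
  rw [← Finset.sum_sdiff (Finset.subset_univ U), Finset.sum_congr rfl hout, ← Finset.sum_mul,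
    ← Finset.sum_coe_sort U]
  simp only [extendByZero_coe]
  push_cast
  ring

lemma re_innerM_opSsub_le (hm : ∀ x, 0 < m x) (hb : ∀ x y, 0 ≤ b x y) (g : ↥U → ℂ) :
    (innerM (fun x : ↥U => m x) (opSsub m b U g) g).re
      ≤ (innerM m (opS m b (extendByZero U g)) (extendByZero U g)).re := by
  rw [innerM_extendByZero_right, innerM, innerM, Complex.re_sum, Complex.re_sum]
  refine Finset.sum_le_sum fun x _ => ?_
  have hmx : (m x : ℂ) ≠ 0 := Complex.ofReal_ne_zero.mpr (hm x).ne'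
  have hsplit : (m x : ℂ) * opS m b (extendByZero U g) x * starRingEnd ℂ (g x)
      = m x * opSsub m b U g x * starRingEnd ℂ (g x)
        + ((∑ y ∈ Finset.univ \ U, (b x y + b y x)) * Complex.normSq (g x) : ℝ) := by
    rw [opS_extendByZero_apply, Complex.ofReal_mul, ← Complex.mul_conj]
    field_simp
  rw [hsplit, Complex.add_re, Complex.ofReal_re, le_add_iff_nonneg_right]
  exact mul_nonneg (Finset.sum_nonneg fun y _ => add_nonneg (hb _ _) (hb _ _))
    (Complex.normSq_nonneg _)

end Subgraph

/-- let `H` be a connected subgraph (on vertex set `U`, `#U = r`) of a finite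
connected directed weighted graph `G` (`#V = n`) satisfying the Kirchhoff assumption.
Then for every `1 ≤ k ≤ r`, `λ_{k+n-r}(S_G) ≥ max(λ_k(S_H), λ_k(S^D_H))`. -/
theorem stmt18 {V : Type*} [Fintype V] [DecidableEq V] (m : V → ℝ) (b : V → V → ℝ)
    (hm : ∀ x, 0 < m x) (hb : ∀ x y, 0 ≤ b x y)
    (U : Finset V)
    (n r : ℕ) (hn : n = Fintype.card V) (hrn : r ≤ n)
    (μG : Fin n → ℝ) (μH : Fin r → ℝ) (μD : Fin r → ℝ)
    (hμG : IsMonoEigenListing m (opS m b) μG)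
    (hμH : IsMonoEigenListing (fun x : ↥U => m ↑x) (opSsub m b U) μH)
    (hμD : IsMonoEigenListing (fun x : ↥U => m ↑x) (opSDir m b U) μD) :
    ∀ k : Fin r, max (μH k) (μD k) ≤ μG ⟨k.1 + n - r, by have := k.isLt; omega⟩ := by
  intro k
  have hkj : n + k ≤ r + (k + n - r) := by omega
  have hE := isLinearMap_extendByZero (U := U)
  have hS := isLinearMap_opS m b
  exact max_le
    (hμH.le_of_compression hμG hS (isLinearMap_opS _ _) hE (innerM_extendByZero m)
      (re_innerM_opSsub_le m b hm hb) hn k _ hkj)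
    (hμD.le_of_compression hμG hS (isLinearMap_opSDir m b) hE (innerM_extendByZero m)
      (fun g => (congrArg Complex.re (innerM_opSDir m b g)).le) hn k _ hkj)
end
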